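/- arXiv:2303.11446 — 2 statements merged into one kernel-verified Lean document; each statement's English description precedes it below -/
import Mathlib

section
/- The 1-dimensional Hausdorff measure of the set of isosceles classes in the triangle of triangles is μH¹({x ∈ T₊ : x₀ = x₁ or x₁ = x₂ or x₀ = x₂}) = (3√6/2)π. -/
open Real MeasureTheory
open scoped ENNReal

/-- The triangle of triangles, inside Euclidean `ℝ³`. -/
def Tplus : Set (EuclideanSpace ℝ (Fin 3)) :=
  {x | x 0 + x 1 + x 2 = π ∧
    0 ≤ x 0 ∧ x 0 ≤ π ∧ 0 ≤ x 1 ∧ x 1 ≤ π ∧ 0 ≤ x 2 ∧ x 2 ≤ π}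

/-!
Each isosceles condition `x (k + 1) = x (k + 2)` cuts out of the triangle `Tplus` its median from
the vertex `apex k` (the degenerate class with angle `π` at `k`) to the midpoint of the opposite
side, a segment of length `√(3/2) π = (√6 / 2) π`. Two distinct medians meet only in the
equilateral class, a single point and hence `μH[1]`-null, so the measure of the union is
`3 (√6 / 2) π`.
-/

theorem isCompact_segment {E : Type*} [AddCommGroup E] [Module ℝ E] [TopologicalSpace E]
    [IsTopologicalAddGroup E] [ContinuousSMul ℝ E] (x y : E) : IsCompact (segment ℝ x y) := by
  rw [segment_eq_image_lineMap]
  exact isCompact_Icc.image AffineMap.lineMap_continuous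

namespace Fin

theorem eq_or_eq_add_one_or_eq_add_two (i k : Fin 3) : i = k ∨ i = k + 1 ∨ i = k + 2 := by
  revert i k; decide

theorem sum_univ_three_rotate {M : Type*} [AddCommMonoid M] (f : Fin 3 → M) (k : Fin 3) :
    ∑ i, f i = f k + f (k + 1) + f (k + 2) := by
  fin_cases k <;>
    simp only [Fin.sum_univ_three, Fin.zero_eta, Fin.mk_one, Fin.reduceFinMk, Fin.reduceAdd, zero_add] <;>
    abel

end Fin

theorem mem_Tplus_iff {x : EuclideanSpace ℝ (Fin 3)} :
    x ∈ Tplus ↔ ∑ i, x i = π ∧ ∀ i, x i ∈ Set.Icc 0 π := by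
  simp [Tplus, Fin.sum_univ_three, Fin.forall_fin_succ, and_assoc]

noncomputable def apex (k : Fin 3) : EuclideanSpace ℝ (Fin 3) := EuclideanSpace.single k π

noncomputable def oppMidpoint (k : Fin 3) : EuclideanSpace ℝ (Fin 3) :=
  midpoint ℝ (apex (k + 1)) (apex (k + 2))

def isoscelesAt (k : Fin 3) : Set (EuclideanSpace ℝ (Fin 3)) :=
  {x ∈ Tplus | x (k + 1) = x (k + 2)}

section

variable (k : Fin 3)

theorem apex_apply (i : Fin 3) : apex k i = if i = k then π else 0 := by
  simp [apex]

theorem oppMidpoint_apply (i : Fin 3) : oppMidpoint k i = if i = k then 0 else π / 2 := by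
  rcases Fin.eq_or_eq_add_one_or_eq_add_two i k with rfl | rfl | rfl <;>
    simp only [oppMidpoint, midpoint_eq_smul_add, invOf_eq_inv, PiLp.smul_apply, PiLp.add_apply,
      apex_apply, smul_eq_mul, ↓reduceIte, add_eq_left, left_eq_add, add_right_inj, one_ne_zero,
      Fin.reduceEq, add_zero, zero_add] <;>
    ring

theorem lineMap_apex_oppMidpoint_apply (t : ℝ) (i : Fin 3) :
    AffineMap.lineMap (apex k) (oppMidpoint k) t i = if i = k then (1 - t) * π else t * π / 2 := by
  simp only [AffineMap.lineMap_apply_module, PiLp.add_apply, PiLp.smul_apply, smul_eq_mul,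
    apex_apply, oppMidpoint_apply]
  split_ifs <;> ring

theorem isoscelesAt_eq_segment : isoscelesAt k = segment ℝ (apex k) (oppMidpoint k) := by
  ext x
  simp only [isoscelesAt, Set.mem_ofPred_eq, mem_Tplus_iff, Fin.sum_univ_three_rotate _ k,
    segment_eq_image_lineMap, Set.mem_image]
  have hpi := pi_pos
  constructor
  · rintro ⟨⟨hsum, hbd⟩, heq⟩
    obtain ⟨hk0, hkπ⟩ := hbd k
    refine ⟨1 - x k / π, ⟨sub_nonneg.2 ((div_le_one hpi).2 hkπ), sub_le_self _ (by positivity)⟩, ?_⟩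
    ext i
    rw [lineMap_apex_oppMidpoint_apply]
    rcases Fin.eq_or_eq_add_one_or_eq_add_two i k with rfl | rfl | rfl <;>
      simp only [↓reduceIte, add_eq_left, one_ne_zero, Fin.reduceEq] <;>
      field_simp <;> linarith
  · rintro ⟨t, ⟨ht0, ht1⟩, rfl⟩
    simp only [lineMap_apex_oppMidpoint_apply, ↓reduceIte, add_eq_left, one_ne_zero, Fin.reduceEq,
      Set.mem_Icc, and_true]
    refine ⟨by ring, fun i => ?_⟩
    split_ifs <;> constructor <;> nlinarith

theorem dist_apex_oppMidpoint : dist (apex k) (oppMidpoint k) = √6 / 2 * π := by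
  have hsq : π ^ 2 + (π / 2) ^ 2 + (π / 2) ^ 2 = (√6 / 2 * π) ^ 2 := by
    rw [mul_pow, div_pow √6, sq_sqrt (by norm_num)]; ring
  rw [dist_eq_norm, EuclideanSpace.norm_eq, Fin.sum_univ_three_rotate _ k]
  simp only [PiLp.sub_apply, apex_apply, oppMidpoint_apply, ↓reduceIte, add_eq_left, one_ne_zero,
    Fin.reduceEq, sub_zero, zero_sub, norm_neg, Real.norm_eq_abs, sq_abs]
  rw [hsq, sqrt_sq (by positivity)]

theorem hausdorffMeasure_isoscelesAt : μH[1] (isoscelesAt k) = ENNReal.ofReal (√6 / 2 * π) := by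
  rw [isoscelesAt_eq_segment, hausdorffMeasure_segment, edist_dist, dist_apex_oppMidpoint]

theorem measurableSet_isoscelesAt : MeasurableSet (isoscelesAt k) := by
  rw [isoscelesAt_eq_segment]
  exact (isCompact_segment _ _).isClosed.measurableSet

end

theorem isoscelesAt_inter_subsingleton {k l : Fin 3} (hkl : k ≠ l) :
    (isoscelesAt k ∩ isoscelesAt l).Subsingleton := by
  suffices ∀ x ∈ isoscelesAt k ∩ isoscelesAt l, ∀ i, x i = π / 3 by
    intro x hx y hy
    ext i
    rw [this x hx, this y hy]
  rintro x ⟨⟨hT, hk⟩, -, hl⟩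
  have hsum := (mem_Tplus_iff.1 hT).1
  rw [Fin.sum_univ_three_rotate _ k] at hsum
  have hkk1 : x k = x (k + 1) := by
    rcases Fin.eq_or_eq_add_one_or_eq_add_two l k with rfl | rfl | rfl
    · exact absurd rfl hkl
    · simp only [add_assoc, Fin.reduceAdd, add_zero] at hl
      linarith
    · simpa only [add_assoc, Fin.reduceAdd, add_zero] using hl
  intro i
  rcases Fin.eq_or_eq_add_one_or_eq_add_two i k with rfl | rfl | rfl <;> linarith

theorem iUnion_isoscelesAt :
    ⋃ k, isoscelesAt k = {x ∈ Tplus | x 0 = x 1 ∨ x 1 = x 2 ∨ x 0 = x 2} := by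
  ext x
  simp only [isoscelesAt, Set.mem_iUnion, Set.mem_ofPred_eq, Fin.exists_fin_succ, Fin.reduceAdd,
    Fin.succ_zero_eq_one, Fin.succ_one_eq_two, IsEmpty.exists_iff, or_false, zero_add]
  grind

theorem measure_of_isosceles :
    μH[1] {x ∈ Tplus | x 0 = x 1 ∨ x 1 = x 2 ∨ x 0 = x 2} =
      ENNReal.ofReal (3 * Real.sqrt 6 / 2 * π) := by
  have := Measure.nullSingletonClass_hausdorff (EuclideanSpace ℝ (Fin 3)) one_pos
  rw [← iUnion_isoscelesAt,
    measure_iUnion₀ (fun k l hkl => (isoscelesAt_inter_subsingleton hkl).measure_zero _)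
      fun k => (measurableSet_isoscelesAt k).nullMeasurableSet,
    tsum_fintype]
  simp only [hausdorffMeasure_isoscelesAt, Finset.sum_const, Finset.card_univ, Fintype.card_fin,
    nsmul_eq_mul]
  rw [← ENNReal.ofReal_natCast, ← ENNReal.ofReal_mul (by norm_num)]
  congr 1
  push_cast
  ring
end

section
/- Obtuse isosceles and acute isosceles classes have equal measure: μH¹({x ∈ T₊ : (x₀ = x₁ or x₁ = x₂ or x₀ = x₂) and (x₀ > π/2 or x₁ > π/2 or x₂ > π/2)}) = μH¹({x ∈ T₊ : (x₀ = x₁ or x₁ = x₂ or x₀ = x₂) and x₀ < π/2 and x₁ < π/2 and x₂ < π/2}) = (3√6/4)π; in particular each is half the measure (3√6/2)π of the full isosceles set. -/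
open Real MeasureTheory
open scoped ENNReal

/-! The classes with equal angles at the two vertices other than `i` form the segment
`a ↦ (a, (π - a)/2, (π - a)/2)` (coordinates permuted so that `a` sits at `i`), `0 ≤ a ≤ π`,
of an affine line traversed at speed `‖(1, -1/2, -1/2)‖ = √6/2`. On it the class is obtuse exactly
for `a ∈ (π/2, π]` and acute exactly for `a ∈ (0, π/2)`: two parameter intervals of the same length
`π/2`. The three segments meet only at the equilateral class, a null set, so both measures equal
`3 · (√6/2) · (π/2)`. -/

open Set

theorem hausdorffMeasure_image_add_smul {E : Type*} [NormedAddCommGroup E] [NormedSpace ℝ E]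
    [MeasurableSpace E] [BorelSpace E] (w v : E) (s : Set ℝ) :
    μH[1] ((fun r => w + r • v) '' s) = ‖v‖₊ • volume s := by
  have h := (IsometryEquiv.addLeft w).hausdorffMeasure_image 1 ((· • v) '' s)
  rw [image_image] at h
  rw [← hausdorffMeasure_real, ← hausdorffMeasure_smul_right_image, ← h]
  rfl

noncomputable def isoscelesLine (i : Fin 3) (a : ℝ) : EuclideanSpace ℝ (Fin 3) :=
  WithLp.toLp 2 fun k => if k = i then a else (π - a) / 2

@[simp]
lemma isoscelesLine_apply (i : Fin 3) (a : ℝ) (k : Fin 3) :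
    isoscelesLine i a k = if k = i then a else (π - a) / 2 := rfl

lemma isoscelesLine_eq_add_smul (i : Fin 3) :
    isoscelesLine i = fun a => isoscelesLine i 0 +
      a • WithLp.toLp 2 (fun k => if k = i then 1 else -1 / 2 : Fin 3 → ℝ) := by
  ext a k
  simp only [isoscelesLine_apply, PiLp.add_apply, PiLp.smul_apply, smul_eq_mul]
  split_ifs <;> ring

lemma hausdorffMeasure_image_isoscelesLine (i : Fin 3) (s : Set ℝ) :
    μH[1] (isoscelesLine i '' s) = ENNReal.ofReal (√6 / 2) * volume s := by
  have hdir : ‖(WithLp.toLp 2 (fun k => if k = i then 1 else -1 / 2 : Fin 3 → ℝ) :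
      EuclideanSpace ℝ (Fin 3))‖ = √6 / 2 := by
    rw [EuclideanSpace.norm_eq, Real.sqrt_eq_iff_mul_self_eq (by positivity) (by positivity)]
    have h6 : √6 * √6 = 6 := Real.mul_self_sqrt (by norm_num)
    fin_cases i <;>
      simp only [Fin.zero_eta, Fin.mk_one, Fin.reduceFinMk, Fin.isValue, norm_eq_abs, sq_abs, ite_pow, one_pow,
        Fin.sum_univ_three, ↓reduceIte, one_ne_zero, zero_ne_one, Fin.reduceEq] <;>
      linarith
  rw [isoscelesLine_eq_add_smul, hausdorffMeasure_image_add_smul, ENNReal.smul_def, smul_eq_mul,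
    ← ENNReal.ofReal_coe_nnreal, coe_nnnorm, hdir]

lemma isoscelesLine_injective (i : Fin 3) : Function.Injective (isoscelesLine i) := fun a b h => by
  simpa using congrArg (· i) h

lemma measurableSet_image_isoscelesLine (i : Fin 3) {s : Set ℝ} (hs : MeasurableSet s) :
    MeasurableSet (isoscelesLine i '' s) := by
  refine hs.image_of_continuousOn_injOn ?_ (isoscelesLine_injective i).injOn
  rw [isoscelesLine_eq_add_smul]
  fun_prop

lemma eq_pi_div_three_of_isoscelesLine_eq {i j : Fin 3} (hij : i ≠ j) {a b : ℝ}
    (h : isoscelesLine i a = isoscelesLine j b) : a = π / 3 := by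
  have hi := congrArg (· i) h
  have hj := congrArg (· j) h
  simp only [isoscelesLine_apply, ↓reduceIte, hij, hij.symm] at hi hj
  linarith

lemma hausdorffMeasure_iUnion_image_isoscelesLine {s : Set ℝ} (hs : MeasurableSet s) :
    μH[1] (⋃ i, isoscelesLine i '' s) = 3 * ENNReal.ofReal (√6 / 2) * volume s := by
  have := Measure.nullSingletonClass_hausdorff (EuclideanSpace ℝ (Fin 3)) one_pos
  rw [measure_iUnion₀ ?_ fun i => (measurableSet_image_isoscelesLine i hs).nullMeasurableSet,
    tsum_fintype]
  · simp [hausdorffMeasure_image_isoscelesLine, mul_assoc]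
  · intro i j hij
    refine measure_mono_null (t := {isoscelesLine i (π / 3)}) ?_ (measure_singleton _)
    rintro _ ⟨⟨a, -, rfl⟩, ⟨b, -, h⟩⟩
    rw [eq_pi_div_three_of_isoscelesLine_eq hij h.symm, mem_singleton_iff]

lemma mem_image_isoscelesLine_iff {i : Fin 3} {s : Set ℝ} {x : EuclideanSpace ℝ (Fin 3)} :
    x ∈ isoscelesLine i '' s ↔ x 0 + x 1 + x 2 = π ∧ x (i + 1) = x (i + 2) ∧ x i ∈ s := by
  constructor
  · rintro ⟨a, ha, rfl⟩
    fin_cases i <;>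
      simp only [Fin.zero_eta, Fin.mk_one, Fin.reduceFinMk, Fin.isValue, isoscelesLine_apply, ↓reduceIte, one_ne_zero,
        zero_ne_one, Fin.reduceEq, Fin.reduceAdd, ha, and_self, and_true, add_halves,
        sub_add_cancel] <;>
      ring
  · rintro ⟨hsum, hiso, hx⟩
    refine ⟨x i, hx, ?_⟩
    ext k
    fin_cases i <;> fin_cases k <;>
      simp only [Fin.zero_eta, Fin.mk_one, Fin.reduceFinMk, Fin.isValue, Fin.reduceAdd, isoscelesLine_apply, ↓reduceIte,
        one_ne_zero, zero_ne_one, Fin.reduceEq] at hiso ⊢ <;>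
      linarith

lemma obtuse_isosceles_eq_iUnion_image_isoscelesLine :
    {x ∈ Tplus | (x 0 = x 1 ∨ x 1 = x 2 ∨ x 0 = x 2) ∧
      (x 0 > π / 2 ∨ x 1 > π / 2 ∨ x 2 > π / 2)} = ⋃ i, isoscelesLine i '' Ioc (π / 2) π := by
  ext x
  simp only [Tplus, mem_ofPred_eq, mem_iUnion, mem_image_isoscelesLine_iff, Fin.exists_fin_succ,
    Fin.succ_zero_eq_one, Fin.succ_one_eq_two, IsEmpty.exists_iff, or_false, Fin.reduceAdd, mem_Ioc]
  have := pi_pos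
  grind

lemma acute_isosceles_eq_iUnion_image_isoscelesLine :
    {x ∈ Tplus | (x 0 = x 1 ∨ x 1 = x 2 ∨ x 0 = x 2) ∧
      x 0 < π / 2 ∧ x 1 < π / 2 ∧ x 2 < π / 2} = ⋃ i, isoscelesLine i '' Ioo 0 (π / 2) := by
  ext x
  simp only [Tplus, mem_ofPred_eq, mem_iUnion, mem_image_isoscelesLine_iff, Fin.exists_fin_succ,
    Fin.succ_zero_eq_one, Fin.succ_one_eq_two, IsEmpty.exists_iff, or_false, Fin.reduceAdd, mem_Ioo]
  have := pi_pos
  grind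

theorem measures_of_obtuse_isosceles_and_acute_isosceles :
    μH[1] {x ∈ Tplus | (x 0 = x 1 ∨ x 1 = x 2 ∨ x 0 = x 2) ∧
        (x 0 > π / 2 ∨ x 1 > π / 2 ∨ x 2 > π / 2)} =
      ENNReal.ofReal (3 * Real.sqrt 6 / 4 * π) ∧
    μH[1] {x ∈ Tplus | (x 0 = x 1 ∨ x 1 = x 2 ∨ x 0 = x 2) ∧
        x 0 < π / 2 ∧ x 1 < π / 2 ∧ x 2 < π / 2} =
      ENNReal.ofReal (3 * Real.sqrt 6 / 4 * π) ∧
    (2 : ℝ≥0∞) * ENNReal.ofReal (3 * Real.sqrt 6 / 4 * π) =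
      ENNReal.ofReal (3 * Real.sqrt 6 / 2 * π) := by
  have hhalf : 3 * ENNReal.ofReal (√6 / 2) * ENNReal.ofReal (π / 2) =
      ENNReal.ofReal (3 * √6 / 4 * π) := by
    rw [← ENNReal.ofReal_ofNat, ← ENNReal.ofReal_mul (by norm_num),
      ← ENNReal.ofReal_mul (by positivity)]
    ring_nf
  refine ⟨?_, ?_, ?_⟩
  · rw [obtuse_isosceles_eq_iUnion_image_isoscelesLine,
      hausdorffMeasure_iUnion_image_isoscelesLine measurableSet_Ioc, Real.volume_Ioc, sub_half, hhalf]
  · rw [acute_isosceles_eq_iUnion_image_isoscelesLine,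
      hausdorffMeasure_iUnion_image_isoscelesLine measurableSet_Ioo, Real.volume_Ioo, sub_zero, hhalf]
  · rw [two_mul, ← ENNReal.ofReal_add (by positivity) (by positivity)]
    ring_nf
end
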